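/- Let N ≥ 1 be an integer, n > 0 a real number, R > 0, H₀ > 0, and let δ ∈ {0, 1}, K ≥ 0, γ > 1. Suppose ρ, V : [0,T′] × [0,∞) → ℝ are C¹ functions with 0 < T′ < 2R^{n+2}/(n(n+1)H₀) such that: (i) ρ(t,r) ≥ 0; (ii) ρ(t,r) = 0 and V(t,r) = 0 whenever r ≥ R; (iii) for each t the map r ↦ ρ(t,r)^{γ−1} is differentiable on (0,R) and for all t ∈ [0,T′] and 0 < r < R: ∂ₜV(t,r) + V(t,r)·∂ᵣV(t,r) + (Kγ/(γ−1))·∂ᵣ(ρ(t,r)^{γ−1}) = δ·α(N)·r^{1−N}·∫₀^r ρ(t,s) s^{N−1} ds; (iv) ∫₀^R r^n V(0,r) dr = H₀. Then for all t ∈ [0,T′], H(t) := ∫₀^R r^n V(t,r) dr satisfies the explicit lower bound H(t) ≥ −2R^{n+2}H₀ / (n(n+1)H₀·t − 2R^{n+2}), which tends to +∞ as t approaches 2R^{n+2}/(n(n+1)H₀) from below. -/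

import Mathlib

/-- The constant `α(N)`: `α(1) = 1`, `α(2) = 2π`, and
`α(N) = N(N−2)·π^{N/2}/Γ(N/2+1)` for `N ≥ 3`. -/
noncomputable def alphaConst (N : ℕ) : ℝ :=
  if N = 1 then 1
  else if N = 2 then 2 * Real.pi
  else (N : ℝ) * ((N : ℝ) - 2) * Real.pi ^ ((N : ℝ) / 2) / Real.Gamma ((N : ℝ) / 2 + 1)

/-!
Multiply the momentum equation by `rⁿ` and integrate over `(0, R)`. Integrating by parts (the
boundary terms vanish because `rⁿ = 0` at `r = 0` and `V = ρ = 0` at `r = R`), the convective and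
pressure terms become `(n/2) ∫ rⁿ⁻¹ V² + n K γ/(γ-1) ∫ rⁿ⁻¹ ρ^(γ-1)`, and the repulsive force is
nonnegative, so `H' ≥ (n/2) ∫ rⁿ⁻¹ V²`. Cauchy–Schwarz with weight `rⁿ⁻¹` gives
`H² ≤ R^(n+2)/(n+2) ∫ rⁿ⁻¹ V²`, hence the Riccati inequality `H' ≥ n(n+1)/(2R^(n+2)) H²`, and
comparison with the Riccati equation (`1/H + n(n+1)t/(2R^(n+2))` is nonincreasing) yields the bound.
-/

open Set Topology MeasureTheory intervalIntegral
open scoped Interval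

lemma alphaConst_nonneg (N : ℕ) : 0 ≤ alphaConst N := by
  unfold alphaConst
  split_ifs
  · norm_num
  · positivity
  · rcases Nat.lt_or_ge N 3 with hN | hN
    · obtain rfl : N = 0 := by omega
      simp
    · have : (3:ℝ) ≤ N := by exact_mod_cast hN
      have := Real.Gamma_pos_of_pos (show (0:ℝ) < N / 2 + 1 by positivity)
      have : (0:ℝ) ≤ N - 2 := by linarith
      positivity

lemma repulsive_force_nonneg (N : ℕ) {δ r : ℝ} {ρ : ℝ → ℝ} (hδ : 0 ≤ δ) (hr : 0 ≤ r)
    (hρ : ∀ s ∈ Icc 0 r, 0 ≤ ρ s) :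
    0 ≤ δ * alphaConst N * r ^ ((1:ℝ) - N) * ∫ s in (0:ℝ)..r, ρ s * s ^ (N - 1) := by
  have hmass : 0 ≤ ∫ s in (0:ℝ)..r, ρ s * s ^ (N - 1) :=
    integral_nonneg hr fun s hs => mul_nonneg (hρ s hs) (pow_nonneg hs.1 _)
  have := alphaConst_nonneg N
  have := Real.rpow_nonneg hr ((1:ℝ) - N)
  positivity

section PartialDerivatives

variable {E : Type*} [NormedAddCommGroup E] [NormedSpace ℝ E] {f : ℝ × ℝ → E} {s t : Set ℝ}
  {a b : ℝ}

lemma DifferentiableWithinAt.hasDerivAt_partial_fst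
    (hf : DifferentiableWithinAt ℝ f (s ×ˢ t) (a, b)) (hs : s ∈ 𝓝 a) (hb : b ∈ t) :
    HasDerivAt (fun x => f (x, b)) (fderivWithin ℝ f (s ×ˢ t) (a, b) (1, 0)) a := by
  have hslice : HasDerivWithinAt (fun x => (x, b)) ((1:ℝ), (0:ℝ)) s a :=
    ((hasDerivAt_id a).prodMk (hasDerivAt_const a b)).hasDerivWithinAt
  have hmaps : MapsTo (fun x => (x, b)) s (s ×ˢ t) := fun x hx => ⟨hx, hb⟩
  exact (hf.hasFDerivWithinAt.comp_hasDerivWithinAt a hslice hmaps).hasDerivAt hs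

lemma DifferentiableWithinAt.hasDerivAt_partial_snd
    (hf : DifferentiableWithinAt ℝ f (s ×ˢ t) (a, b)) (ha : a ∈ s) (ht : t ∈ 𝓝 b) :
    HasDerivAt (fun y => f (a, y)) (fderivWithin ℝ f (s ×ˢ t) (a, b) (0, 1)) b := by
  have hslice : HasDerivWithinAt (fun y => (a, y)) ((0:ℝ), (1:ℝ)) t b :=
    ((hasDerivAt_const b a).prodMk (hasDerivAt_id b)).hasDerivWithinAt
  have hmaps : MapsTo (fun y => (a, y)) t (s ×ˢ t) := fun y hy => ⟨ha, hy⟩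
  exact (hf.hasFDerivWithinAt.comp_hasDerivWithinAt b hslice hmaps).hasDerivAt ht

end PartialDerivatives

section ParametricIntegral

variable {E : Type*} [NormedAddCommGroup E] [NormedSpace ℝ E] {f f' : ℝ → ℝ → E} {s : Set ℝ}
  {a b : ℝ}

lemma continuousOn_intervalIntegral_of_continuousOn (hs : IsCompact s)
    (hf : ContinuousOn (Function.uncurry f) (s ×ˢ [[a, b]])) :
    ContinuousOn (fun t => ∫ r in a..b, f t r) s := by
  obtain ⟨M, hM⟩ := (hs.prod isCompact_uIcc).exists_bound_of_continuousOn hf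
  intro t₀ ht₀
  refine continuousWithinAt_of_dominated_interval (bound := fun _ => M) ?_ ?_
    intervalIntegrable_const ?_
  · filter_upwards [self_mem_nhdsWithin] with t ht
    exact ((ContinuousOn.uncurry_left _ ht hf).mono uIoc_subset_uIcc).aestronglyMeasurable
      measurableSet_uIoc
  · filter_upwards [self_mem_nhdsWithin] with t ht
    exact ae_of_all _ fun r hr => hM (t, r) ⟨ht, uIoc_subset_uIcc hr⟩
  · refine ae_of_all _ fun r hr => ?_
    exact ContinuousOn.uncurry_right _ (uIoc_subset_uIcc hr) hf t₀ ht₀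

lemma hasDerivAt_intervalIntegral_of_continuousOn {t₀ : ℝ} (hs : IsCompact s)
    (ht₀ : t₀ ∈ interior s) (hf : ContinuousOn (Function.uncurry f) (s ×ˢ [[a, b]]))
    (hf' : ContinuousOn (Function.uncurry f') (s ×ˢ [[a, b]]))
    (hderiv : ∀ t ∈ interior s, ∀ r ∈ Ι a b, HasDerivAt (f · r) (f' t r) t) :
    HasDerivAt (fun t => ∫ r in a..b, f t r) (∫ r in a..b, f' t₀ r) t₀ := by
  obtain ⟨M, hM⟩ := (hs.prod isCompact_uIcc).exists_bound_of_continuousOn hf'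
  refine (hasDerivAt_integral_of_dominated_loc_of_deriv_le (bound := fun _ => M)
    (isOpen_interior.mem_nhds ht₀) ?_ ?_ ?_ ?_ intervalIntegrable_const ?_).2
  · filter_upwards [isOpen_interior.mem_nhds ht₀] with t ht
    exact ((ContinuousOn.uncurry_left _ (interior_subset ht) hf).mono
      uIoc_subset_uIcc).aestronglyMeasurable measurableSet_uIoc
  · exact (ContinuousOn.uncurry_left _ (interior_subset ht₀) hf).intervalIntegrable
  · exact ((ContinuousOn.uncurry_left _ (interior_subset ht₀) hf').mono
      uIoc_subset_uIcc).aestronglyMeasurable measurableSet_uIoc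
  · exact ae_of_all _ fun r hr t ht => hM (t, r) ⟨interior_subset ht, uIoc_subset_uIcc hr⟩
  · exact ae_of_all _ fun r hr t ht => hderiv t ht r hr

end ParametricIntegral

section Moment

variable {T R n : ℝ} {V : ℝ → ℝ → ℝ}

lemma continuousOn_rpow_mul_uncurry (hn : 0 < n) (hR : 0 ≤ R)
    (hV : ContinuousOn (Function.uncurry V) (Icc 0 T ×ˢ Ici 0)) :
    ContinuousOn (Function.uncurry fun t r => r ^ n * V t r) (Icc 0 T ×ˢ [[0, R]]) :=
  ((continuousOn_snd.rpow_const fun _ _ => Or.inr hn.le).mul hV).mono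
    (prod_mono subset_rfl (by rw [uIcc_of_le hR]; exact Icc_subset_Ici_self))

lemma continuousOn_integral_rpow_mul (hn : 0 < n) (hR : 0 ≤ R)
    (hV : ContinuousOn (Function.uncurry V) (Icc 0 T ×ˢ Ici 0)) :
    ContinuousOn (fun t => ∫ r in (0:ℝ)..R, r ^ n * V t r) (Icc 0 T) :=
  continuousOn_intervalIntegral_of_continuousOn isCompact_Icc
    (continuousOn_rpow_mul_uncurry hn hR hV)

lemma hasDerivAt_fst_of_contDiffOn
    (hV : ContDiffOn ℝ 1 (Function.uncurry V) (Icc 0 T ×ˢ Ici 0)) {t r : ℝ} (ht : t ∈ Ioo 0 T) (hr : 0 ≤ r) :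
    HasDerivAt (V · r) (fderivWithin ℝ (Function.uncurry V) (Icc 0 T ×ˢ Ici 0) (t, r) (1, 0)) t :=
  (hV.differentiableOn one_ne_zero (t, r) ⟨Ioo_subset_Icc_self ht, hr⟩).hasDerivAt_partial_fst
    (Icc_mem_nhds ht.1 ht.2) hr

lemma differentiableAt_snd_of_contDiffOn
    (hV : ContDiffOn ℝ 1 (Function.uncurry V) (Icc 0 T ×ˢ Ici 0)) {t r : ℝ} (ht : t ∈ Icc 0 T) (hr : 0 < r) :
    DifferentiableAt ℝ (V t) r :=
  ((hV.differentiableOn one_ne_zero (t, r) ⟨ht, hr.le⟩).hasDerivAt_partial_snd ht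
    (Ici_mem_nhds hr)).differentiableAt

lemma continuousOn_fderivWithin_fst_of_contDiffOn
    (hV : ContDiffOn ℝ 1 (Function.uncurry V) (Icc 0 T ×ˢ Ici 0)) (hT : 0 < T) :
    ContinuousOn (Function.uncurry fun t r =>
      fderivWithin ℝ (Function.uncurry V) (Icc 0 T ×ˢ Ici 0) (t, r) (1, 0)) (Icc 0 T ×ˢ Ici 0) :=
  (hV.continuousOn_fderivWithin ((uniqueDiffOn_Icc hT).prod (uniqueDiffOn_Ici 0))
    le_rfl).clm_apply continuousOn_const

lemma continuousOn_deriv_fst_of_contDiffOn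
    (hV : ContDiffOn ℝ 1 (Function.uncurry V) (Icc 0 T ×ˢ Ici 0)) (hT : 0 < T) {t : ℝ} (ht : t ∈ Ioo 0 T) :
    ContinuousOn (fun r => deriv (V · r) t) (Ici 0) :=
  (ContinuousOn.uncurry_left t (Ioo_subset_Icc_self ht)
    (continuousOn_fderivWithin_fst_of_contDiffOn hV hT)).congr
    fun _ hr => (hasDerivAt_fst_of_contDiffOn hV ht hr).deriv

lemma hasDerivAt_integral_rpow_mul_of_contDiffOn
    (hV : ContDiffOn ℝ 1 (Function.uncurry V) (Icc 0 T ×ˢ Ici 0)) (hT : 0 < T)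
    (hR : 0 ≤ R) (hn : 0 < n) {t : ℝ} (ht : t ∈ Ioo 0 T) :
    HasDerivAt (fun τ => ∫ r in (0:ℝ)..R, r ^ n * V τ r)
      (∫ r in (0:ℝ)..R, r ^ n * deriv (V · r) t) t := by
  have hderiv := hasDerivAt_intervalIntegral_of_continuousOn isCompact_Icc
    (by rwa [interior_Icc]) (continuousOn_rpow_mul_uncurry hn hR hV.continuousOn)
    (continuousOn_rpow_mul_uncurry hn hR (continuousOn_fderivWithin_fst_of_contDiffOn hV hT))
    (by
      rw [interior_Icc, uIoc_of_le hR]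
      exact fun τ hτ r hr => (hasDerivAt_fst_of_contDiffOn hV hτ hr.1.le).const_mul _)
  refine hderiv.congr_deriv (integral_congr fun r hr => ?_)
  rw [uIcc_of_le hR] at hr
  simp only [(hasDerivAt_fst_of_contDiffOn hV ht hr.1).deriv]

end Moment

lemma sq_intervalIntegral_mul_le {a b : ℝ} (hab : a ≤ b) {w f g : ℝ → ℝ}
    (hw : ∀ x ∈ Icc a b, 0 ≤ w x)
    (hf : IntervalIntegrable (fun x => w x * f x ^ 2) volume a b)
    (hg : IntervalIntegrable (fun x => w x * g x ^ 2) volume a b)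
    (hfg : IntervalIntegrable (fun x => w x * (f x * g x)) volume a b) :
    (∫ x in a..b, w x * (f x * g x)) ^ 2
      ≤ (∫ x in a..b, w x * f x ^ 2) * ∫ x in a..b, w x * g x ^ 2 := by
  have hquad : ∀ y : ℝ, 0 ≤ (∫ x in a..b, w x * g x ^ 2) * (y * y)
      + (-2 * ∫ x in a..b, w x * (f x * g x)) * y + ∫ x in a..b, w x * f x ^ 2 := by
    intro y
    have hexpand : (fun x => w x * (y * g x - f x) ^ 2) = fun x =>
        y ^ 2 * (w x * g x ^ 2) - 2 * y * (w x * (f x * g x)) + w x * f x ^ 2 := by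
      ext x; ring
    have hnonneg : 0 ≤ ∫ x in a..b, w x * (y * g x - f x) ^ 2 :=
      integral_nonneg hab fun x hx => mul_nonneg (hw x hx) (sq_nonneg _)
    rw [hexpand, integral_add ((hg.const_mul _).sub (hfg.const_mul _)) hf,
      integral_sub (hg.const_mul _) (hfg.const_mul _), intervalIntegral.integral_const_mul,
      intervalIntegral.integral_const_mul] at hnonneg
    linarith
  have := discrim_le_zero hquad
  rw [discrim] at this
  linarith

lemma sq_integral_rpow_mul_le {n R : ℝ} (hn : 0 < n) (hR : 0 ≤ R) {W : ℝ → ℝ}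
    (hW : ContinuousOn W (Icc 0 R)) :
    (∫ r in (0:ℝ)..R, r ^ n * W r) ^ 2
      ≤ R ^ (n + 2) / (n + 2) * ∫ r in (0:ℝ)..R, r ^ (n - 1) * W r ^ 2 := by
  have hweight : IntervalIntegrable (fun r : ℝ => r ^ (n - 1)) volume 0 R :=
    intervalIntegrable_rpow' (by linarith)
  rw [← uIcc_of_le hR] at hW
  have hcs := sq_intervalIntegral_mul_le hR (w := fun r => r ^ (n - 1)) (f := W) (g := id)
    (fun r hr => Real.rpow_nonneg hr.1 _) (hweight.mul_continuousOn (hW.pow 2))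
    (hweight.mul_continuousOn (continuousOn_id.pow 2))
    (hweight.mul_continuousOn (hW.mul continuousOn_id))
  have hmoment : ∫ r in (0:ℝ)..R, r ^ (n - 1) * (W r * id r) = ∫ r in (0:ℝ)..R, r ^ n * W r := by
    refine integral_congr fun r hr => ?_
    rw [uIcc_of_le hR] at hr
    have : r ^ n = r ^ (n - 1) * r := by
      rw [← Real.rpow_add_one' hr.1 (by linarith), sub_add_cancel]
    simp only [id, this]
    ring
  have hweight_sq : ∫ r in (0:ℝ)..R, r ^ (n - 1) * id r ^ 2 = R ^ (n + 2) / (n + 2) := by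
    have : ∫ r in (0:ℝ)..R, r ^ (n - 1) * id r ^ 2 = ∫ r in (0:ℝ)..R, r ^ (n + 1) := by
      refine integral_congr fun r hr => ?_
      rw [uIcc_of_le hR] at hr
      simp only [id]
      rw [← Real.rpow_natCast, ← Real.rpow_add' hr.1 (by push_cast; linarith)]
      push_cast; ring_nf
    rw [this, integral_rpow (Or.inl (by linarith)), Real.zero_rpow (by linarith)]
    ring_nf
  rw [hmoment, hweight_sq] at hcs
  linarith

lemma half_mul_integral_le_of_momentum {n R c : ℝ} (hn : 0 < n) (hR : 0 < R) (hc : 0 ≤ c)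
    {W W' Q Q' A : ℝ → ℝ} (hW : ContinuousOn W (Icc 0 R)) (hQ : ContinuousOn Q (Icc 0 R))
    (hA : ContinuousOn A (Icc 0 R)) (hQ₀ : ∀ r ∈ Icc 0 R, 0 ≤ Q r) (hWR : W R = 0)
    (hQR : Q R = 0) (hW' : ∀ r ∈ Ioo 0 R, HasDerivAt W (W' r) r)
    (hQ' : ∀ r ∈ Ioo 0 R, HasDerivAt Q (Q' r) r)
    (hmom : ∀ r ∈ Ioo 0 R, 0 ≤ A r + W r * W' r + c * Q' r) :
    n / 2 * ∫ r in (0:ℝ)..R, r ^ (n - 1) * W r ^ 2 ≤ ∫ r in (0:ℝ)..R, r ^ n * A r := by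
  have hrpow : ContinuousOn (fun r : ℝ => r ^ n) (Icc 0 R) :=
    continuousOn_id.rpow_const fun _ _ => Or.inr hn.le
  have hweight : IntervalIntegrable (fun r : ℝ => r ^ (n - 1)) volume 0 R :=
    intervalIntegrable_rpow' (by linarith)
  rw [← uIcc_of_le hR.le] at hW hQ hA hrpow
  have hkin : IntervalIntegrable (fun r => r ^ (n - 1) * W r ^ 2) volume 0 R :=
    hweight.mul_continuousOn (hW.pow 2)
  have hpres : IntervalIntegrable (fun r => r ^ (n - 1) * Q r) volume 0 R :=
    hweight.mul_continuousOn hQ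
  have hmomt : IntervalIntegrable (fun r => r ^ n * A r) volume 0 R :=
    (hrpow.mul hA).intervalIntegrable
  set energy : ℝ → ℝ := fun r => -(r ^ n * (W r ^ 2 / 2 + c * Q r))
  have henergy : ContinuousOn energy (Icc 0 R) := by
    rw [← uIcc_of_le hR.le]
    exact (hrpow.mul (((hW.pow 2).div_const 2).add (hQ.const_smul c))).neg
  have hderiv : ∀ r ∈ Ioo 0 R, HasDerivAt energy
      (-(n * r ^ (n - 1) * (W r ^ 2 / 2 + c * Q r) + r ^ n * (W r * W' r + c * Q' r))) r := by
    intro r hr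
    have hW2 : HasDerivAt (fun s => W s ^ 2 / 2) (W r * W' r) r :=
      (((hW' r hr).pow 2).div_const 2).congr_deriv (by norm_num; ring)
    exact ((Real.hasDerivAt_rpow_const (Or.inl hr.1.ne')).mul
      (hW2.add ((hQ' r hr).const_mul c))).neg
  have hle : ∀ r ∈ Ioo 0 R,
      -(n * r ^ (n - 1) * (W r ^ 2 / 2 + c * Q r) + r ^ n * (W r * W' r + c * Q' r))
        ≤ r ^ n * A r - n / 2 * (r ^ (n - 1) * W r ^ 2) - c * n * (r ^ (n - 1) * Q r) := by
    intro r hr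
    nlinarith [mul_nonneg (Real.rpow_nonneg hr.1.le n) (hmom r hr)]
  -- The one-sided FTC needs no integrability of `energy'`, i.e. of `W W'` and `Q'`.
  have hftc := sub_le_integral_of_hasDeriv_right_of_le hR.le henergy
    (fun r hr => (hderiv r hr).hasDerivWithinAt)
    ((intervalIntegrable_iff_integrableOn_Icc_of_le hR.le).1
      ((hmomt.sub (hkin.const_mul _)).sub (hpres.const_mul _))) hle
  have hpres₀ : 0 ≤ ∫ r in (0:ℝ)..R, r ^ (n - 1) * Q r :=
    integral_nonneg hR.le fun r hr => mul_nonneg (Real.rpow_nonneg hr.1 _) (hQ₀ r hr)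
  rw [integral_sub (hmomt.sub (hkin.const_mul _)) (hpres.const_mul _),
    integral_sub hmomt (hkin.const_mul _), intervalIntegral.integral_const_mul,
    intervalIntegral.integral_const_mul] at hftc
  simp only [energy, hWR, hQR, Real.zero_rpow hn.ne'] at hftc
  nlinarith [mul_nonneg (mul_nonneg hc hn.le) hpres₀]

lemma mul_sq_integral_le_of_momentum {n R c : ℝ} (hn : 0 < n) (hR : 0 < R) (hc : 0 ≤ c)
    {W W' Q Q' A : ℝ → ℝ} (hW : ContinuousOn W (Icc 0 R)) (hQ : ContinuousOn Q (Icc 0 R))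
    (hA : ContinuousOn A (Icc 0 R)) (hQ₀ : ∀ r ∈ Icc 0 R, 0 ≤ Q r) (hWR : W R = 0)
    (hQR : Q R = 0) (hW' : ∀ r ∈ Ioo 0 R, HasDerivAt W (W' r) r)
    (hQ' : ∀ r ∈ Ioo 0 R, HasDerivAt Q (Q' r) r)
    (hmom : ∀ r ∈ Ioo 0 R, 0 ≤ A r + W r * W' r + c * Q' r) :
    n * (n + 2) / (2 * R ^ (n + 2)) * (∫ r in (0:ℝ)..R, r ^ n * W r) ^ 2
      ≤ ∫ r in (0:ℝ)..R, r ^ n * A r := by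
  have hRn : 0 < R ^ (n + 2) := Real.rpow_pos_of_pos hR _
  calc n * (n + 2) / (2 * R ^ (n + 2)) * (∫ r in (0:ℝ)..R, r ^ n * W r) ^ 2
      ≤ n * (n + 2) / (2 * R ^ (n + 2)) *
          (R ^ (n + 2) / (n + 2) * ∫ r in (0:ℝ)..R, r ^ (n - 1) * W r ^ 2) := by
        gcongr
        exact sq_integral_rpow_mul_le hn hR.le hW
    _ = n / 2 * ∫ r in (0:ℝ)..R, r ^ (n - 1) * W r ^ 2 := by
        field_simp
    _ ≤ ∫ r in (0:ℝ)..R, r ^ n * A r :=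
        half_mul_integral_le_of_momentum hn hR hc hW hQ hA hQ₀ hWR hQR hW' hQ' hmom

lemma mul_sq_integral_le_of_euler_poisson (N : ℕ) {n R K γ δ : ℝ} (hn : 0 < n) (hR : 0 < R)
    (hK : 0 ≤ K) (hγ : 1 < γ) (hδ : 0 ≤ δ) {ρ W A : ℝ → ℝ} (hρ : ContinuousOn ρ (Icc 0 R))
    (hW : ContinuousOn W (Icc 0 R)) (hA : ContinuousOn A (Icc 0 R)) (hρ₀ : ∀ r, 0 ≤ ρ r)
    (hρR : ρ R = 0) (hWR : W R = 0) (hW' : ∀ r ∈ Ioo 0 R, DifferentiableAt ℝ W r)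
    (hp' : ∀ r ∈ Ioo 0 R, DifferentiableAt ℝ (fun s => ρ s ^ (γ - 1)) r)
    (hmom : ∀ r ∈ Ioo 0 R, A r + W r * deriv W r
        + (K * γ / (γ - 1)) * deriv (fun s => ρ s ^ (γ - 1)) r
      = δ * alphaConst N * r ^ ((1:ℝ) - N) * ∫ s in (0:ℝ)..r, ρ s * s ^ (N - 1)) :
    n * (n + 2) / (2 * R ^ (n + 2)) * (∫ r in (0:ℝ)..R, r ^ n * W r) ^ 2
      ≤ ∫ r in (0:ℝ)..R, r ^ n * A r := by
  refine mul_sq_integral_le_of_momentum (c := K * γ / (γ - 1)) hn hR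
    (div_nonneg (mul_nonneg hK (by linarith)) (by linarith)) hW
    (hρ.rpow_const fun _ _ => Or.inr (by linarith)) hA
    (fun r _ => Real.rpow_nonneg (hρ₀ r) _) hWR
    (by rw [hρR, Real.zero_rpow (by linarith)]) (fun r hr => (hW' r hr).hasDerivAt)
    (fun r hr => (hp' r hr).hasDerivAt) fun r hr => ?_
  rw [hmom r hr]
  exact repulsive_force_nonneg N hδ hr.1.le fun s _ => hρ₀ s

section Riccati

variable {H H' : ℝ → ℝ} {a b c : ℝ}

lemma pos_of_riccati (hc : 0 ≤ c) (hH : ContinuousOn H (Icc a b))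
    (hH' : ∀ t ∈ Ioo a b, HasDerivAt H (H' t) t) (hric : ∀ t ∈ Ioo a b, c * H t ^ 2 ≤ H' t)
    (ha : 0 < H a) : ∀ t ∈ Icc a b, 0 < H t := by
  have hmono : MonotoneOn H (Icc a b) := by
    refine monotoneOn_of_hasDerivWithinAt_nonneg (f' := H') (convex_Icc a b) hH ?_ ?_ <;>
      rw [interior_Icc]
    · exact fun t ht => (hH' t ht).hasDerivWithinAt
    · exact fun t ht => (by positivity : 0 ≤ c * H t ^ 2).trans (hric t ht)
  exact fun t ht => ha.trans_le (hmono ⟨le_rfl, ht.1.trans ht.2⟩ ht ht.1)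

lemma antitoneOn_inv_add_mul_of_riccati (hH : ContinuousOn H (Icc a b))
    (hH' : ∀ t ∈ Ioo a b, HasDerivAt H (H' t) t) (hric : ∀ t ∈ Ioo a b, c * H t ^ 2 ≤ H' t)
    (hpos : ∀ t ∈ Icc a b, 0 < H t) : AntitoneOn (fun t => (H t)⁻¹ + c * t) (Icc a b) := by
  refine antitoneOn_of_hasDerivWithinAt_nonpos (f' := fun t => -H' t / H t ^ 2 + c * 1)
    (convex_Icc a b)
    ((hH.inv₀ fun t ht => (hpos t ht).ne').add (continuousOn_const.mul continuousOn_id))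
    ?_ ?_ <;> rw [interior_Icc] <;> intro t ht <;> have hHt := hpos t (Ioo_subset_Icc_self ht)
  · exact (((hH' t ht).inv hHt.ne').add ((hasDerivAt_id t).const_mul c)).hasDerivWithinAt
  · rw [mul_one, neg_div, neg_add_nonpos_iff, le_div_iff₀ (by positivity)]
    exact hric t ht

lemma riccati_lower_bound (hc : 0 ≤ c) (hH : ContinuousOn H (Icc a b))
    (hH' : ∀ t ∈ Ioo a b, HasDerivAt H (H' t) t) (hric : ∀ t ∈ Ioo a b, c * H t ^ 2 ≤ H' t)
    (ha : 0 < H a) : ∀ t ∈ Icc a b, H a / (1 - c * H a * (t - a)) ≤ H t := by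
  intro t ht
  have hpos := pos_of_riccati hc hH hH' hric ha
  have hHt := hpos t ht
  have hdecay : (H t)⁻¹ ≤ (H a)⁻¹ - c * (t - a) := by
    have := antitoneOn_inv_add_mul_of_riccati hH hH' hric hpos ⟨le_rfl, ht.1.trans ht.2⟩ ht ht.1
    simp only at this
    linarith
  have hden : H a / H t ≤ 1 - c * H a * (t - a) :=
    calc H a / H t = H a * (H t)⁻¹ := div_eq_mul_inv _ _
      _ ≤ H a * ((H a)⁻¹ - c * (t - a)) := by gcongr
      _ = 1 - c * H a * (t - a) := by field_simp
  rw [div_le_iff₀ ((div_pos ha hHt).trans_le hden)]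
  calc H a = H t * (H a / H t) := by field_simp
    _ ≤ H t * (1 - c * H a * (t - a)) := by gcongr

end Riccati

theorem explicit_lower_bound_repulsive_general
    (N : ℕ) (n R H₀ K γ T' δ : ℝ)
    (hn : 0 < n) (hR : 0 < R) (hH₀ : 0 < H₀) (hK : 0 ≤ K) (hγ : 1 < γ)
    (hδ : δ = 0 ∨ δ = 1)
    (hT'pos : 0 < T')
    (ρ V : ℝ → ℝ → ℝ)
    (hρC1 : ContDiffOn ℝ 1 (Function.uncurry ρ) (Set.Icc 0 T' ×ˢ Set.Ici 0))
    (hVC1 : ContDiffOn ℝ 1 (Function.uncurry V) (Set.Icc 0 T' ×ˢ Set.Ici 0))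
    (hρnn : ∀ t r, 0 ≤ ρ t r)
    (hsupp : ∀ t r, R ≤ r → ρ t r = 0 ∧ V t r = 0)
    (hdiffp : ∀ t ∈ Set.Icc (0:ℝ) T', ∀ r ∈ Set.Ioo (0:ℝ) R,
      DifferentiableAt ℝ (fun s => ρ t s ^ (γ - 1)) r)
    (hmom : ∀ t ∈ Set.Icc (0:ℝ) T', ∀ r ∈ Set.Ioo (0:ℝ) R,
      deriv (fun τ => V τ r) t + V t r * deriv (fun s => V t s) r
        + (K * γ / (γ - 1)) * deriv (fun s => ρ t s ^ (γ - 1)) r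
      = δ * alphaConst N * r ^ ((1:ℝ) - N) * ∫ s in (0:ℝ)..r, ρ t s * s ^ (N - 1))
    (hH0 : (∫ r in (0:ℝ)..R, r ^ n * V 0 r) = H₀) :
    ∀ t ∈ Set.Icc (0:ℝ) T',
      -(2 * R ^ (n + 2) * H₀) / (n * (n + 1) * H₀ * t - 2 * R ^ (n + 2))
      ≤ ∫ r in (0:ℝ)..R, r ^ n * V t r := by
  have hδ₀ : 0 ≤ δ := by rcases hδ with h | h <;> simp [h]
  have hric : ∀ t ∈ Ioo 0 T', n * (n + 1) / (2 * R ^ (n + 2)) * (∫ r in (0:ℝ)..R, r ^ n * V t r) ^ 2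
      ≤ ∫ r in (0:ℝ)..R, r ^ n * deriv (V · r) t := by
    intro t ht
    have htI := Ioo_subset_Icc_self ht
    refine le_trans ?_ (mul_sq_integral_le_of_euler_poisson N hn hR hK hγ hδ₀
      ((ContinuousOn.uncurry_left t htI hρC1.continuousOn).mono Icc_subset_Ici_self)
      ((ContinuousOn.uncurry_left t htI hVC1.continuousOn).mono Icc_subset_Ici_self)
      ((continuousOn_deriv_fst_of_contDiffOn hVC1 hT'pos ht).mono Icc_subset_Ici_self)
      (hρnn t) (hsupp t R le_rfl).1 (hsupp t R le_rfl).2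
      (fun r hr => differentiableAt_snd_of_contDiffOn hVC1 htI hr.1) (hdiffp t htI) (hmom t htI))
    gcongr
    linarith
  intro t ht
  have hbound := riccati_lower_bound (by positivity)
    (continuousOn_integral_rpow_mul hn hR.le hVC1.continuousOn)
    (fun t ht => hasDerivAt_integral_rpow_mul_of_contDiffOn hVC1 hT'pos hR.le hn ht) hric
    (hH0 ▸ hH₀) t ht
  have hden : 1 - n * (n + 1) / (2 * R ^ (n + 2)) * H₀ * (t - 0)
      = -(n * (n + 1) * H₀ * t - 2 * R ^ (n + 2)) / (2 * R ^ (n + 2)) := by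
    have := Real.rpow_pos_of_pos hR (n + 2)
    field_simp
    ring
  rwa [hH0, hden, div_div_eq_mul_div, div_neg, ← neg_div, mul_comm] at hbound

/-- Explicit lower bound of the integration method for the Euler (`δ = 0`) or repulsive
Euler–Poisson (`δ = 1`) equations: on any time interval `[0,T′]` with
`T′ < 2R^{n+2}/(n(n+1)H₀)`, the functional `H(t) = ∫₀^R rⁿ V(t,r) dr` satisfies
`H(t) ≥ −2R^{n+2}H₀/(n(n+1)H₀t − 2R^{n+2})`. -/
theorem explicit_lower_bound_repulsive
    (N : ℕ) (hN : 1 ≤ N) (n R H₀ K γ T' δ : ℝ)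
    (hn : 0 < n) (hR : 0 < R) (hH₀ : 0 < H₀) (hK : 0 ≤ K) (hγ : 1 < γ)
    (hδ : δ = 0 ∨ δ = 1)
    (hT'pos : 0 < T') (hT' : T' < 2 * R ^ (n + 2) / (n * (n + 1) * H₀))
    (ρ V : ℝ → ℝ → ℝ)
    (hρC1 : ContDiffOn ℝ 1 (Function.uncurry ρ) (Set.Icc 0 T' ×ˢ Set.Ici 0))
    (hVC1 : ContDiffOn ℝ 1 (Function.uncurry V) (Set.Icc 0 T' ×ˢ Set.Ici 0))
    (hρnn : ∀ t r, 0 ≤ ρ t r)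
    (hsupp : ∀ t r, R ≤ r → ρ t r = 0 ∧ V t r = 0)
    (hdiffp : ∀ t ∈ Set.Icc (0:ℝ) T', ∀ r ∈ Set.Ioo (0:ℝ) R,
      DifferentiableAt ℝ (fun s => ρ t s ^ (γ - 1)) r)
    (hmom : ∀ t ∈ Set.Icc (0:ℝ) T', ∀ r ∈ Set.Ioo (0:ℝ) R,
      deriv (fun τ => V τ r) t + V t r * deriv (fun s => V t s) r
        + (K * γ / (γ - 1)) * deriv (fun s => ρ t s ^ (γ - 1)) r
      = δ * alphaConst N * r ^ ((1:ℝ) - N) * ∫ s in (0:ℝ)..r, ρ t s * s ^ (N - 1))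
    (hH0 : (∫ r in (0:ℝ)..R, r ^ n * V 0 r) = H₀) :
    ∀ t ∈ Set.Icc (0:ℝ) T',
      -(2 * R ^ (n + 2) * H₀) / (n * (n + 1) * H₀ * t - 2 * R ^ (n + 2))
      ≤ ∫ r in (0:ℝ)..R, r ^ n * V t r :=
  explicit_lower_bound_repulsive_general N n R H₀ K γ T' δ hn hR hH₀ hK hγ hδ hT'pos ρ V hρC1 hVC1
    hρnn hsupp hdiffp hmom hH0
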